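/- A subset M of an unsatisfiable finite knowledge base KB is a MUS if and only if M is a minimal hitting set of the collection of all MCSes of KB. -/

import Mathlib

/-- An interpretation assigns Boolean values to propositional variables. -/
abbrev Interp := ℕ → Bool
/-- A formula is identified with its semantics: the set of interpretations satisfying it. -/
abbrev Form := Interp → Prop

/-- An interpretation satisfies a set of formulas (interpreted conjunctively). -/
def Satisfies (i : Interp) (S : Set Form) : Prop := ∀ f ∈ S, f i
/-- A set of formulas is satisfiable. -/
def Sat (S : Set Form) : Prop := ∃ i, Satisfies i S
/-- Classical entailment: every model of S is a model of φ. -/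
def Entails (S : Set Form) (φ : Form) : Prop := ∀ i, Satisfies i S → φ i
/-- Negation of a formula. -/
def FNeg (φ : Form) : Form := fun i => ¬ φ i
/-- Minimal unsatisfiable subset of KB. -/
def IsMUS (KB M : Set Form) : Prop := M ⊆ KB ∧ ¬ Sat M ∧ ∀ M' ⊂ M, Sat M'
/-- Minimal correction set of KB. -/
def IsMCS (KB C : Set Form) : Prop := C ⊆ KB ∧ Sat (KB \ C) ∧ ∀ C' ⊂ C, ¬ Sat (KB \ C')
/-- H hits every member of Γ. -/
def HittingSet (Γ : Set (Set Form)) (H : Set Form) : Prop := ∀ S ∈ Γ, (H ∩ S).Nonempty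
/-- Minimal hitting set (under inclusion). -/
def MinHittingSet (Γ : Set (Set Form)) (H : Set Form) : Prop :=
  HittingSet Γ H ∧ ∀ H' ⊂ H, ¬ HittingSet Γ H'
/-- ε is a support for φ from KB: inclusion-minimal subset of KB entailing φ. -/
def IsSupport (KB : Set Form) (φ : Form) (ε : Set Form) : Prop :=
  ε ⊆ KB ∧ Entails ε φ ∧ ∀ ε' ⊂ ε, ¬ Entails ε' φ

/-! A subset of a satisfiable set is satisfiable, so the unsatisfiable subsets of `KB` are
exactly the subsets meeting every MCS: an unsatisfiable `X` cannot lie inside the satisfiable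
complement of an MCS, and a satisfiable `X` extends (by finiteness) to a maximal satisfiable
`S ⊆ KB`, whose complement `KB \ S` is an MCS missing `X`. Taking inclusion-minimal elements on
both sides of this equivalence turns MUSes into minimal hitting sets of the MCSes. -/

theorem Sat.mono {S T : Set Form} (hT : Sat T) (h : S ⊆ T) : Sat S :=
  let ⟨i, hi⟩ := hT
  ⟨i, fun f hf => hi f (h hf)⟩

theorem IsMCS.inter_nonempty_of_not_sat {KB C X : Set Form} (hC : IsMCS KB C) (hX : X ⊆ KB)
    (hunsat : ¬ Sat X) : (X ∩ C).Nonempty := by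
  by_contra hdisj
  have hXsub : X ⊆ KB \ C := fun f hf => ⟨hX hf, fun hfC => hdisj ⟨f, hf, hfC⟩⟩
  exact hunsat (hC.2.1.mono hXsub)

theorem isMCS_diff_of_maximal {KB S : Set Form} (hS : Maximal (fun T => T ⊆ KB ∧ Sat T) S) :
    IsMCS KB (KB \ S) := by
  have hcompl : KB \ (KB \ S) = S := Set.sdiff_sdiff_cancel_left hS.prop.1
  refine ⟨Set.sdiff_subset, by rw [hcompl]; exact hS.prop.2, fun C' hC' hsat => ?_⟩
  have hSsub : S ⊆ KB \ C' := hcompl ▸ Set.sdiff_subset_sdiff_right hC'.subset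
  have hsubS : KB \ C' ⊆ S := hS.2 ⟨Set.sdiff_subset, hsat⟩ hSsub
  obtain ⟨x, ⟨hxKB, hxS⟩, hxC'⟩ := Set.exists_of_ssubset hC'
  exact hxS (hsubS ⟨hxKB, hxC'⟩)

theorem exists_isMCS_disjoint_of_sat {KB X : Set Form} (hfin : KB.Finite) (hX : X ⊆ KB)
    (hsat : Sat X) : ∃ C, IsMCS KB C ∧ Disjoint X C := by
  have hfinSat : {T | T ⊆ KB ∧ Sat T}.Finite := hfin.finite_subsets.subset fun _ hT => hT.1
  obtain ⟨S, hXS, hS⟩ := hfinSat.exists_le_maximal (a := X) ⟨hX, hsat⟩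
  exact ⟨KB \ S, isMCS_diff_of_maximal hS, Set.disjoint_sdiff_right.mono_left hXS⟩

theorem not_sat_iff_hittingSet_isMCS {KB X : Set Form} (hfin : KB.Finite) (hX : X ⊆ KB) :
    ¬ Sat X ↔ HittingSet {C | IsMCS KB C} X := by
  refine ⟨fun hunsat C hC => hC.inter_nonempty_of_not_sat hX hunsat, fun hhit hsat => ?_⟩
  obtain ⟨C, hC, hdisj⟩ := exists_isMCS_disjoint_of_sat hfin hX hsat
  exact Set.not_nonempty_iff_eq_empty.mpr hdisj.inter_eq (hhit C hC)

theorem stmt4_general (KB M : Set Form) (hfin : KB.Finite) (hsub : M ⊆ KB) :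
    IsMUS KB M ↔ MinHittingSet {C | IsMCS KB C} M := by
  have unsat_iff_hits : ∀ X ⊆ M, ¬ Sat X ↔ HittingSet {C | IsMCS KB C} X := fun X hX =>
    not_sat_iff_hittingSet_isMCS hfin (hX.trans hsub)
  constructor
  · rintro ⟨-, hunsat, hmin⟩
    exact ⟨(unsat_iff_hits M le_rfl).mp hunsat,
      fun M' hM' hhit => (unsat_iff_hits M' hM'.subset).mpr hhit (hmin M' hM')⟩
  · rintro ⟨hhit, hmin⟩
    exact ⟨hsub, (unsat_iff_hits M le_rfl).mpr hhit,
      fun M' hM' => not_not.mp fun hunsat => hmin M' hM' ((unsat_iff_hits M' hM'.subset).mp hunsat)⟩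

/-- M ⊆ KB is a MUS iff it is a minimal hitting set of the collection of all MCSes of KB. -/
theorem stmt4 (KB M : Set Form) (hfin : KB.Finite) (hunsat : ¬ Sat KB) (hsub : M ⊆ KB) :
    IsMUS KB M ↔ MinHittingSet {C | IsMCS KB C} M :=
  stmt4_general KB M hfin hsub
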